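/- arXiv:1812.01256 — 4 statements merged into one kernel-verified Lean document; each statement's English description precedes it below -/
import Mathlib

section
/- Let M be a binary matroid, let X be a nonempty independent set in M, and suppose some component D of M is disjoint from X. Then D is also a component of the Γ-extension matroid M^X; in particular, if M is disconnected and some component of M is disjoint from X, then M^X is disconnected. -/
open Set
open scoped Classical

/-- A circuit of a matroid: a minimal dependent set. -/
def MatroidCircuit {α : Type*} (M : Matroid α) (C : Set α) : Prop :=
  M.Dep C ∧ ∀ D ⊂ C, ¬ M.Dep D

/-- A cocircuit of a matroid: a circuit of the dual matroid. -/
def MatroidCocircuit {α : Type*} (M : Matroid α) (C : Set α) : Prop :=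
  MatroidCircuit M✶ C

/-- The rank of a set in a matroid, as an extended natural number: the supremum of the
cardinalities of independent subsets of the set. -/
noncomputable def matroidERk {α : Type*} (M : Matroid α) (A : Set α) : ℕ∞ :=
  ⨆ I : {I : Set α // M.Indep I ∧ I ⊆ A}, (I : Set α).encard

/-- The rank of a matroid. -/
noncomputable def matroidERank {α : Type*} (M : Matroid α) : ℕ∞ :=
  matroidERk M M.E

/-- Deletion of a set from a matroid: the restriction to the complement. -/
def matroidDelete {α : Type*} (M : Matroid α) (Y : Set α) : Matroid α :=
  M.restrict (M.E \ Y)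

/-- A `k`-separation of a matroid `M`: a partition of the ground set into disjoint sets `A`, `B`
with `min (|A|, |B|) ≥ k` and `r(A) + r(B) - r(M) ≤ k - 1`. -/
def KSeparation {α : Type*} (M : Matroid α) (k : ℕ) (A B : Set α) : Prop :=
  Disjoint A B ∧ A ∪ B = M.E ∧ (k : ℕ∞) ≤ A.encard ∧ (k : ℕ∞) ≤ B.encard ∧
    matroidERk M A + matroidERk M B ≤ matroidERank M + ((k : ℕ∞) - 1)

/-- For `k ≥ 2`, a matroid is `k`-connected if it has no `(k-1)`-separation. -/
def KConnected {α : Type*} (M : Matroid α) (k : ℕ) : Prop :=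
  ∀ A B : Set α, ¬ KSeparation M (k - 1) A B

/-- The relation `e ~ f` iff `e = f` or some circuit contains both `e` and `f`. -/
def ConnRel {α : Type*} (M : Matroid α) (e f : α) : Prop :=
  e = f ∨ ∃ C, MatroidCircuit M C ∧ e ∈ C ∧ f ∈ C

/-- A component of a matroid: an equivalence class of the relation `ConnRel` on the
ground set. -/
def MatroidComponent {α : Type*} (M : Matroid α) (D : Set α) : Prop :=
  ∃ e ∈ M.E, D = {f ∈ M.E | ConnRel M e f}

/-- A matroid is connected if it has exactly one component. -/
def MatroidConnected {α : Type*} (M : Matroid α) : Prop :=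
  ∃! D : Set α, MatroidComponent M D

/-- `M` is the vector matroid over GF(2) of the matrix with column set `S` whose column at
`e ∈ S` is `A e`: a set is independent iff it is a subset of `S` whose columns are linearly
independent over GF(2). -/
def IsBinaryRep {α ρ : Type*} (M : Matroid α) (S : Set α) (A : α → ρ → ZMod 2) : Prop :=
  M.E = S ∧ ∀ I : Set α, M.Indep I ↔ I ⊆ S ∧ LinearIndependent (ZMod 2) (fun e : I => A e.1)

/-- The columns of the matrix `A^X` of the Γ-extension: for each index `i`, the new column
labelled `g i` agrees with the column of `x i` in the old rows and has entry `1` in the new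
row (indexed by `none`), while every old column keeps its entries in the old rows and has
entry `0` in the new row. -/
noncomputable def gammaCols {α ρ ι : Type*} (A : α → ρ → ZMod 2) (x g : ι → α) :
    α → Option ρ → ZMod 2 := fun e o =>
  if h : ∃ i, g i = e then o.elim 1 (fun r => A (x h.choose) r)
  else o.elim 0 (fun r => A e r)

/- Along the old rows, the column of `γᵢ` in `A^X` is the column of `xᵢ`, and every old column
only gains a zero entry, so `M^X` restricted to `S` is `M`. Let `D` be the component of `e₀` in
`M` and `C` a circuit of `M^X` through `e₀`. Projecting the dependence of `e₀` on `C \ {e₀}` onto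
the old rows puts `e₀` in the `M`-closure of `C \ {e₀}` with each `γᵢ` replaced by `xᵢ`, which
gives a circuit `C₀` of `M` through `e₀`. As `C₀ ⊆ D` and `D` avoids `X`, we get `C₀ ⊆ C`, hence
`C = C₀ ⊆ D`. So `D` is a component of `M^X`, and since it misses `X ≠ ∅`, `M^X` is
disconnected. -/

section Connectivity

variable {α : Type*} {M : Matroid α} {C D : Set α} {e f : α}

lemma matroidCircuit_iff_isCircuit : MatroidCircuit M C ↔ M.IsCircuit C := by
  rw [MatroidCircuit, Matroid.isCircuit_iff_forall_ssubset]
  refine and_congr_right fun hC => forall₂_congr fun I hIC => ?_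
  exact Matroid.not_dep_iff (hIC.subset.trans hC.subset_ground)

lemma connRel_iff : ConnRel M e f ↔ e = f ∨ ∃ C, M.IsCircuit C ∧ e ∈ C ∧ f ∈ C := by
  simp only [ConnRel, matroidCircuit_iff_isCircuit]

lemma MatroidConnected.mem_of_matroidComponent (hM : MatroidConnected M)
    (hD : MatroidComponent M D) (he : e ∈ M.E) : e ∈ D := by
  obtain ⟨D', -, huniq⟩ := hM
  rw [(huniq D hD).trans (huniq _ ⟨e, he, rfl⟩).symm]
  exact ⟨he, Or.inl rfl⟩

end Connectivity

namespace IsBinaryRep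

variable {α ρ : Type*} {M : Matroid α} {S I C X : Set α} {A : α → ρ → ZMod 2} {e : α}

lemma indep_insert_iff (hM : IsBinaryRep M S A) (hI : M.Indep I) (heS : e ∈ S) (heI : e ∉ I) :
    M.Indep (insert e I) ↔ A e ∉ Submodule.span (ZMod 2) (A '' I) := by
  obtain ⟨hIS, hIA⟩ := (hM.2 I).1 hI
  rw [hM.2]
  change insert e I ⊆ S ∧ LinearIndepOn (ZMod 2) A (insert e I) ↔ _
  rw [linearIndepOn_insert heI, insert_subset_iff]
  exact ⟨fun h => h.2.2, fun h => ⟨⟨heS, hIS⟩, hIA, h⟩⟩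

lemma mem_span_of_isCircuit (hM : IsBinaryRep M S A) (hC : M.IsCircuit C) (heC : e ∈ C) :
    A e ∈ Submodule.span (ZMod 2) (A '' (C \ {e})) := by
  have heS : e ∈ S := hM.1 ▸ hC.subset_ground heC
  have hdep : ¬ M.Indep (insert e (C \ {e})) := by
    rw [insert_sdiff_singleton, insert_eq_of_mem heC]
    exact hC.not_indep
  rwa [hM.indep_insert_iff (hC.sdiff_singleton_indep heC) heS (fun h => h.2 rfl), not_not] at hdep

lemma mem_closure_of_mem_span (hM : IsBinaryRep M S A) (hXS : X ⊆ S) (heS : e ∈ S)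
    (he : A e ∈ Submodule.span (ZMod 2) (A '' X)) : e ∈ M.closure X := by
  obtain ⟨I, hI⟩ := M.exists_isBasis X (hM.1 ▸ hXS)
  have hspan : Submodule.span (ZMod 2) (A '' X) ≤ Submodule.span (ZMod 2) (A '' I) := by
    refine Submodule.span_le.2 <| image_subset_iff.2 fun f hfX => ?_
    by_cases hfI : f ∈ I
    · exact Submodule.subset_span (mem_image_of_mem A hfI)
    · have hdep := (hI.insert_dep ⟨hfX, hfI⟩).not_indep
      rwa [hM.indep_insert_iff hI.indep (hXS hfX) hfI, not_not] at hdep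
  rw [← hI.closure_eq_closure]
  by_contra hecl
  have heI : e ∉ I := fun h => hecl (M.subset_closure I hI.indep.subset_ground h)
  have hindep : M.Indep (insert e I) := hI.indep.insert_indep_iff.2 (Or.inl ⟨hM.1 ▸ heS, hecl⟩)
  exact (hM.indep_insert_iff hI.indep heS heI).1 hindep (hspan he)

end IsBinaryRep

section GammaExtension

variable {α ρ ι : Type*} {A : α → ρ → ZMod 2} {x g : ι → α} {e : α}

noncomputable def gammaCollapse (x g : ι → α) (e : α) : α :=
  if h : ∃ i, g i = e then x h.choose else e

lemma gammaCollapse_of_notMem (h : e ∉ range g) : gammaCollapse x g e = e :=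
  dif_neg h

lemma gammaCollapse_mem_range (h : e ∈ range g) : gammaCollapse x g e ∈ range x := by
  rw [gammaCollapse, dif_pos (mem_range.1 h)]
  exact mem_range_self _

lemma gammaCols_comp_some (A : α → ρ → ZMod 2) (x g : ι → α) (e : α) :
    gammaCols A x g e ∘ some = A (gammaCollapse x g e) := by
  funext r
  simp only [Function.comp_apply, gammaCols, gammaCollapse]
  split_ifs <;> rfl

lemma gammaCols_of_notMem (h : e ∉ range g) :
    gammaCols A x g e = Function.extend some (A e) 0 := by
  funext o
  simp only [gammaCols, dif_neg (mem_range.not.1 h)]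
  cases o <;> simp [Function.extend_apply', (Option.some_injective ρ).extend_apply]

variable {M MX : Matroid α} {S C : Set α}

theorem IsBinaryRep.restrict_gammaExtension (hM : IsBinaryRep M S A)
    (hMX : IsBinaryRep MX (S ∪ range g) (gammaCols A x g)) (hdisj : Disjoint S (range g)) :
    MX.restrict S = M := by
  refine Matroid.ext_indep (by rw [Matroid.restrict_ground_eq, hM.1]) fun I hIS => ?_
  rw [Matroid.restrict_ground_eq] at hIS
  have hcols : EqOn (gammaCols A x g) (Function.ExtendByZero.linearMap (ZMod 2) some ∘ A) I :=
    fun e he => gammaCols_of_notMem (disjoint_left.1 hdisj (hIS he))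
  have hinj := (Function.ExtendByZero.linearMap (ZMod 2) some).linearIndepOn_iff_of_injOn
    (v := A) (s := I)
    (Function.extend_injective (Option.some_injective ρ) (0 : Option ρ → ZMod 2)).injOn
  rw [Matroid.restrict_indep_iff, hMX.2, hM.2]
  change (_ ∧ LinearIndepOn _ _ _) ∧ _ ↔ _ ∧ LinearIndepOn _ _ _
  rw [linearIndepOn_congr hcols, hinj]
  exact ⟨fun h => ⟨h.2, h.1.2⟩, fun h => ⟨⟨hIS.trans subset_union_left, h.2⟩, h.1⟩⟩

lemma IsBinaryRep.isCircuit_gammaExtension (hM : IsBinaryRep M S A)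
    (hMX : IsBinaryRep MX (S ∪ range g) (gammaCols A x g)) (hdisj : Disjoint S (range g))
    (hC : M.IsCircuit C) : MX.IsCircuit C := by
  rw [← hM.restrict_gammaExtension hMX hdisj,
    Matroid.restrict_isCircuit_iff (hMX.1 ▸ subset_union_left)] at hC
  exact hC.1

lemma IsBinaryRep.exists_isCircuit_subset_insert_gammaCollapse (hM : IsBinaryRep M S A)
    (hMX : IsBinaryRep MX (S ∪ range g) (gammaCols A x g)) (hdisj : Disjoint S (range g))
    (hxS : range x ⊆ S) (hC : MX.IsCircuit C) (heC : e ∈ C) (heS : e ∈ S) (hex : e ∉ range x) :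
    ∃ C₀ ⊆ insert e (gammaCollapse x g '' (C \ {e})), M.IsCircuit C₀ ∧ e ∈ C₀ := by
  have hCS : C \ range g ⊆ S := fun c hc =>
    ((hMX.1 ▸ hC.subset_ground hc.1 : c ∈ S ∪ range g)).resolve_right hc.2
  have himS : gammaCollapse x g '' (C \ {e}) ⊆ S := by
    rintro _ ⟨c, hc, rfl⟩
    by_cases hcg : c ∈ range g
    · exact hxS (gammaCollapse_mem_range hcg)
    · rw [gammaCollapse_of_notMem hcg]
      exact hCS ⟨hc.1, hcg⟩
  have heim : e ∉ gammaCollapse x g '' (C \ {e}) := by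
    rintro ⟨c, hc, hce⟩
    by_cases hcg : c ∈ range g
    · exact hex (hce ▸ gammaCollapse_mem_range hcg)
    · rw [gammaCollapse_of_notMem hcg] at hce
      exact hc.2 hce
  have hspan : A e ∈ Submodule.span (ZMod 2) (A '' (gammaCollapse x g '' (C \ {e}))) := by
    have h := Submodule.mem_map_of_mem (f := LinearMap.funLeft (ZMod 2) (ZMod 2) (some : ρ → _))
      (hMX.mem_span_of_isCircuit hC heC)
    rw [← Submodule.span_image, image_image] at h
    simp only [LinearMap.funLeft, LinearMap.coe_mk, AddHom.coe_mk, gammaCols_comp_some,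
      gammaCollapse_of_notMem (disjoint_left.1 hdisj heS)] at h
    rwa [image_image]
  exact Matroid.exists_isCircuit_of_mem_closure (hM.mem_closure_of_mem_span himS heS hspan) heim

lemma IsBinaryRep.subset_connRel_of_isCircuit_gammaExtension (hM : IsBinaryRep M S A)
    (hMX : IsBinaryRep MX (S ∪ range g) (gammaCols A x g)) (hdisj : Disjoint S (range g))
    (hxS : range x ⊆ S) (hC : MX.IsCircuit C) (heC : e ∈ C) (heS : e ∈ S)
    (hDX : Disjoint {f ∈ M.E | ConnRel M e f} (range x)) :
    C ⊆ {f ∈ M.E | ConnRel M e f} := by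
  have heD : e ∈ {f ∈ M.E | ConnRel M e f} := ⟨hM.1 ▸ heS, Or.inl rfl⟩
  obtain ⟨C₀, hC₀sub, hC₀, heC₀⟩ := hM.exists_isCircuit_subset_insert_gammaCollapse hMX hdisj hxS
    hC heC heS (disjoint_left.1 hDX heD)
  have hC₀D : C₀ ⊆ {f ∈ M.E | ConnRel M e f} := fun f hf =>
    ⟨hC₀.subset_ground hf, connRel_iff.2 (Or.inr ⟨C₀, hC₀, heC₀, hf⟩)⟩
  have hC₀C : C₀ ⊆ C := by
    intro f hf
    obtain rfl | ⟨c, hc, rfl⟩ := hC₀sub hf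
    · exact heC
    · by_cases hcg : c ∈ range g
      · exact absurd (gammaCollapse_mem_range hcg) (disjoint_left.1 hDX (hC₀D hf))
      · rw [gammaCollapse_of_notMem hcg]
        exact hc.1
  rw [← (hM.isCircuit_gammaExtension hMX hdisj hC₀).eq_of_subset_isCircuit hC hC₀C]
  exact hC₀D

theorem IsBinaryRep.matroidComponent_gammaExtension (hM : IsBinaryRep M S A)
    (hMX : IsBinaryRep MX (S ∪ range g) (gammaCols A x g)) (hdisj : Disjoint S (range g))
    (hxS : range x ⊆ S) {D : Set α} (hD : MatroidComponent M D) (hDX : Disjoint D (range x)) :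
    MatroidComponent MX D := by
  obtain ⟨e, heE, rfl⟩ := hD
  have heS : e ∈ S := hM.1 ▸ heE
  refine ⟨e, hMX.1 ▸ Or.inl heS, Set.ext fun f => ⟨fun ⟨hf, hef⟩ => ?_, fun ⟨_, hef⟩ => ?_⟩⟩
  · refine ⟨hMX.1 ▸ Or.inl (hM.1 ▸ hf), connRel_iff.2 ?_⟩
    exact (connRel_iff.1 hef).imp_right fun ⟨C, hC, hCef⟩ =>
      ⟨C, hM.isCircuit_gammaExtension hMX hdisj hC, hCef⟩
  · obtain rfl | ⟨C, hC, heC, hfC⟩ := connRel_iff.1 hef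
    · exact ⟨heE, Or.inl rfl⟩
    · exact hM.subset_connRel_of_isCircuit_gammaExtension hMX hdisj hxS hC heC heS hDX hfC

end GammaExtension

theorem stmt_2_general {α ρ ι : Type*} [Nonempty ι]
    (M MX : Matroid α) (S : Set α) (A : α → ρ → ZMod 2) (x g : ι → α)
    (hxS : Set.range x ⊆ S) (hdisj : Disjoint S (Set.range g))
    (hM : IsBinaryRep M S A)
    (hMX : IsBinaryRep MX (S ∪ Set.range g) (gammaCols A x g))
    (D : Set α) (hD : MatroidComponent M D) (hDX : Disjoint D (Set.range x)) :
    MatroidComponent MX D ∧ (¬ MatroidConnected M → ¬ MatroidConnected MX) := by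
  have hcomp := hM.matroidComponent_gammaExtension hMX hdisj hxS hD hDX
  refine ⟨hcomp, fun _ hconn => ?_⟩
  obtain ⟨i⟩ := ‹Nonempty ι›
  have hxi : x i ∈ MX.E := hMX.1 ▸ Or.inl (hxS (mem_range_self i))
  exact disjoint_left.1 hDX (hconn.mem_of_matroidComponent hcomp hxi) (mem_range_self i)

/-- If a component `D` of the binary matroid `M` (loopless and coloopless) is disjoint from
the nonempty independent set `X = range x`, then `D` is also a component of the Γ-extension
`M^X`; in particular, if `M` is disconnected and some component of `M` is disjoint from `X`,
then `M^X` is disconnected. -/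
theorem stmt_2 {α ρ ι : Type*} [Fintype ι] [Nonempty ι]
    (M MX : Matroid α) (S : Set α) (A : α → ρ → ZMod 2) (x g : ι → α)
    (hxinj : Function.Injective x) (hginj : Function.Injective g)
    (hxS : Set.range x ⊆ S) (hdisj : Disjoint S (Set.range g))
    (hXindep : M.Indep (Set.range x))
    (hM : IsBinaryRep M S A)
    (hMX : IsBinaryRep MX (S ∪ Set.range g) (gammaCols A x g))
    (hloopless : ∀ e ∈ M.E, M.Indep {e})
    (hcoloopless : ∀ e ∈ M.E, M✶.Indep {e})
    (D : Set α) (hD : MatroidComponent M D) (hDX : Disjoint D (Set.range x)) :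
    MatroidComponent MX D ∧ (¬ MatroidConnected M → ¬ MatroidConnected MX) :=
  stmt_2_general M MX S A x g hxS hdisj hM hMX D hD hDX
end

section
/- Let M be a binary matroid with ground set S, let X be a nonempty independent set in M, and let M^X be the Γ-extension of M with ground set S ∪ Γ. Then the set Γ is independent in M^X. -/
open Set
open scoped Classical

section GammaExtension

variable {α ρ ι : Type*}

theorem IsBinaryRep.indep_range_iff {M : Matroid α} {S : Set α} {A : α → ρ → ZMod 2}
    {f : ι → α} (hM : IsBinaryRep M S A) (hf : Function.Injective f) :
    M.Indep (range f) ↔ range f ⊆ S ∧ LinearIndependent (ZMod 2) (A ∘ f) := by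
  rw [hM.2, ← linearIndependent_equiv (Equiv.ofInjective f hf)]
  rfl

theorem gammaCols_apply_self {A : α → ρ → ZMod 2} {x g : ι → α} (hg : Function.Injective g)
    (i : ι) : gammaCols A x g (g i) = fun o => o.elim 1 (A (x i)) := by
  have h : ∃ j, g j = g i := ⟨i, rfl⟩
  funext o
  simp only [gammaCols, dif_pos h]
  rw [hg h.choose_spec]

/-- Forgetting the new row sends the column of `γ_i` to that of `x_i`. -/
theorem linearIndependent_gammaCols {A : α → ρ → ZMod 2} {x g : ι → α}
    (hg : Function.Injective g) (hx : LinearIndependent (ZMod 2) (A ∘ x)) :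
    LinearIndependent (ZMod 2) (gammaCols A x g ∘ g) := by
  refine LinearIndependent.of_comp (LinearMap.funLeft (ZMod 2) (ZMod 2) some) ?_
  convert hx using 1
  ext i r
  simp [LinearMap.funLeft, gammaCols_apply_self hg]

end GammaExtension

theorem stmt_4_general {α ρ ι : Type*}
    (M MX : Matroid α) (S : Set α) (A : α → ρ → ZMod 2) (x g : ι → α)
    (hxinj : Function.Injective x) (hginj : Function.Injective g)
    (hXindep : M.Indep (Set.range x))
    (hM : IsBinaryRep M S A)
    (hMX : IsBinaryRep MX (S ∪ Set.range g) (gammaCols A x g)) :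
    MX.Indep (Set.range g) := by
  rw [hMX.indep_range_iff hginj]
  exact ⟨subset_union_right,
    linearIndependent_gammaCols hginj ((hM.indep_range_iff hxinj).1 hXindep).2⟩

/-- Lemma 2.1(i): The set `Γ = range g` is independent in the Γ-extension `M^X`. -/
theorem stmt_4 {α ρ ι : Type*} [Fintype ι] [Nonempty ι]
    (M MX : Matroid α) (S : Set α) (A : α → ρ → ZMod 2) (x g : ι → α)
    (hxinj : Function.Injective x) (hginj : Function.Injective g)
    (hxS : Set.range x ⊆ S) (hdisj : Disjoint S (Set.range g))
    (hXindep : M.Indep (Set.range x))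
    (hM : IsBinaryRep M S A)
    (hMX : IsBinaryRep MX (S ∪ Set.range g) (gammaCols A x g)) :
    MX.Indep (Set.range g) :=
  stmt_4_general M MX S A x g hxinj hginj hXindep hM hMX
end

section
/- Let M be a binary matroid with ground set S, let X be a nonempty independent set in M, and let M^X be the Γ-extension of M with ground set S ∪ Γ. Then Γ contains a cocircuit of M^X. Consequently, if M^X is k-connected (k ≥ 2) and M^X has at least 2(k−1) elements, then |X| ≥ k. -/
open Set
open scoped Classical

/-! The new row of `A^X` is supported exactly on `Γ`. An independent set avoiding `Γ` has only
zero entries in that row, so adjoining any `γ ∈ Γ` keeps it independent; hence no basis of `M^X`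
avoids `Γ`, i.e. `Γ` is codependent and contains a cocircuit `C`. In a `k`-connected matroid
with at least `2(k-1)` elements every cocircuit has at least `k` elements: otherwise pad `C` to a
set `A` of size `k-1`; then `r(A) ≤ k-1` and `E \ A` lies in the hyperplane `E \ C`, so
`(A, E \ A)` is a `(k-1)`-separation. -/

namespace Matroid

variable {α : Type*} {M : Matroid α}

lemma matroidERk_eq_eRk (M : Matroid α) (X : Set α) : matroidERk M X = M.eRk X := by
  refine le_antisymm (iSup_le fun I => I.2.1.encard_le_eRk_of_subset I.2.2) ?_
  obtain ⟨I, hI⟩ := M.exists_isBasis' X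
  rw [← hI.encard_eq_eRk]
  exact le_iSup_of_le (⟨I, hI.indep, hI.subset⟩ : {I // M.Indep I ∧ I ⊆ X}) le_rfl

lemma matroidERank_eq_eRank (M : Matroid α) : matroidERank M = M.eRank := by
  rw [matroidERank, matroidERk_eq_eRk, eRk_ground]

lemma matroidCocircuit_iff_isCocircuit {C : Set α} : MatroidCocircuit M C ↔ M.IsCocircuit C := by
  rw [isCocircuit_def, isCircuit_def, minimal_iff_forall_ssubset]
  rfl

lemma IsCocircuit.eRk_compl_add_one_le {C : Set α} (hC : M.IsCocircuit C) :
    M.eRk (M.E \ C) + 1 ≤ M.eRank := by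
  obtain ⟨I, hI⟩ := M.exists_isBasis (M.E \ C)
  obtain ⟨B, hB⟩ := M.exists_isBase
  have hIB : ¬ M.IsBase I := fun hIB => by
    obtain ⟨e, heC, heI⟩ := (isCocircuit_iff_minimal.1 hC).prop I hIB
    exact (hI.subset heI).2 heC
  obtain ⟨e, he, hins⟩ := hI.indep.exists_insert_of_not_isBase hIB hB
  rw [hI.eRk_eq_encard, ← encard_insert_of_notMem he.2]
  exact hins.encard_le_eRank

end Matroid

open Matroid

lemma ENat.add_le_add_tsub_one_of_le {a b r : ℕ∞} {m : ℕ} (ha : a ≤ m) (hb : b + 1 ≤ r) :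
    a + b ≤ r + ((m : ℕ∞) - 1) := by
  rcases m with _ | n
  · rw [Nat.cast_zero, nonpos_iff_eq_zero.1 ha, zero_add]
    exact le_self_add.trans (hb.trans le_self_add)
  · have hsub : ((n + 1 : ℕ) : ℕ∞) - 1 = n := by
      rw [← ENat.natCast_one, ← ENat.natCast_sub, Nat.add_sub_cancel]
    calc a + b ≤ (n + 1 : ℕ∞) + b := by push_cast at ha; gcongr
      _ = n + (b + 1) := by ring
      _ ≤ r + (((n + 1 : ℕ) : ℕ∞) - 1) := by rw [hsub, add_comm r]; gcongr

lemma KConnected.le_encard_of_isCocircuit {α : Type*} {M : Matroid α} {k : ℕ} {C : Set α}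
    (hM : KConnected M k) (hE : ((2 * (k - 1) : ℕ) : ℕ∞) ≤ M.E.encard) (hC : M.IsCocircuit C) :
    (k : ℕ∞) ≤ C.encard := by
  by_contra! hCk
  obtain _ | m := k
  · exact not_lt_zero hCk
  rw [Nat.add_sub_cancel] at hE
  rw [Nat.cast_add_one, ENat.lt_add_one_iff (ENat.natCast_ne_top m)] at hCk
  obtain ⟨A, hCA, hAE, hAm⟩ := exists_superset_subset_encard_eq hC.subset_ground hCk
    (le_trans (by exact_mod_cast (by omega : m ≤ 2 * m)) hE)
  have hBm : (m : ℕ∞) ≤ (M.E \ A).encard := by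
    have hsplit := encard_sdiff_add_encard_of_subset hAE
    rw [hAm] at hsplit
    rw [← ENat.add_le_add_iff_right (ENat.natCast_ne_top m), hsplit, ← two_mul]
    exact_mod_cast hE
  refine hM A (M.E \ A) ⟨disjoint_sdiff_right, union_sdiff_cancel hAE, hAm.ge, hBm, ?_⟩
  rw [matroidERk_eq_eRk, matroidERk_eq_eRk, matroidERank_eq_eRank]
  refine ENat.add_le_add_tsub_one_of_le ((M.eRk_le_encard A).trans hAm.le)
    (le_trans ?_ hC.eRk_compl_add_one_le)
  gcongr
  exact M.eRk_mono (sdiff_subset_sdiff_right hCA)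

lemma apply_eq_zero_of_mem_span_image {R ι ρ : Type*} [Semiring R] {v : ι → ρ → R} {s : Set ι}
    {r : ρ} (hs : ∀ i ∈ s, v i r = 0) {w : ρ → R} (hw : w ∈ Submodule.span R (v '' s)) :
    w r = 0 :=
  (Submodule.span_le (p := LinearMap.ker (LinearMap.proj r)).2
    (by rintro _ ⟨i, hi, rfl⟩; exact hs i hi)) hw

lemma IsBinaryRep.indep_insert_of_apply_eq_zero {α ρ : Type*} {M : Matroid α} {S I : Set α}
    {v : α → ρ → ZMod 2} {e : α} (hM : IsBinaryRep M S v) (r : ρ) (hI : M.Indep I) (he : e ∈ S)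
    (hIr : ∀ f ∈ I, v f r = 0) (her : v e r ≠ 0) : M.Indep (insert e I) := by
  obtain ⟨hIS, hIv⟩ := (hM.2 I).1 hI
  exact (hM.2 _).2 ⟨insert_subset he hIS,
    LinearIndepOn.insert hIv fun hspan => her (apply_eq_zero_of_mem_span_image hIr hspan)⟩

section GammaExtension

variable {α ρ ι : Type*} {A : α → ρ → ZMod 2} {x g : ι → α}

lemma gammaCols_apply_none (j : ι) : gammaCols A x g (g j) none = 1 := by
  rw [gammaCols, dif_pos ⟨j, rfl⟩]
  rfl

lemma gammaCols_apply_none_of_notMem_range {e : α} (he : e ∉ range g) :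
    gammaCols A x g e none = 0 := by
  rw [gammaCols, dif_neg (show ¬∃ i, g i = e from he)]
  rfl

lemma IsBinaryRep.range_inter_nonempty_of_isBase [Nonempty ι] {MX : Matroid α} {S B : Set α}
    (hMX : IsBinaryRep MX (S ∪ range g) (gammaCols A x g)) (hB : MX.IsBase B) :
    (range g ∩ B).Nonempty := by
  by_contra hBg
  obtain ⟨j⟩ := ‹Nonempty ι›
  have hjB : g j ∉ B := fun hj => hBg ⟨g j, ⟨j, rfl⟩, hj⟩
  refine (hB.insert_dep ⟨hMX.1 ▸ Or.inr ⟨j, rfl⟩, hjB⟩).not_indep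
    (hMX.indep_insert_of_apply_eq_zero none hB.indep (Or.inr ⟨j, rfl⟩) ?_ ?_)
  · exact fun f hf => gammaCols_apply_none_of_notMem_range fun hfg => hBg ⟨f, hfg, hf⟩
  · rw [gammaCols_apply_none]
    exact one_ne_zero

end GammaExtension

theorem stmt_14_general {α ρ ι : Type*} [Fintype ι] [Nonempty ι]
    (MX : Matroid α) (S : Set α) (A : α → ρ → ZMod 2) (x g : ι → α)
    (hMX : IsBinaryRep MX (S ∪ Set.range g) (gammaCols A x g)) :
    (∃ C : Set α, C ⊆ Set.range g ∧ MatroidCocircuit MX C) ∧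
      (∀ k : ℕ, 2 ≤ k → KConnected MX k →
        ((2 * (k - 1) : ℕ) : ℕ∞) ≤ (S ∪ Set.range g).encard → k ≤ Fintype.card ι) := by
  have hdep : MX✶.Dep (range g) :=
    dual_dep_iff_forall.2 ⟨fun _ hB => hMX.range_inter_nonempty_of_isBase hB,
      hMX.1 ▸ subset_union_right⟩
  obtain ⟨C, hCg, hC⟩ := hdep.exists_isCircuit_subset
  refine ⟨⟨C, hCg, matroidCocircuit_iff_isCocircuit.2 hC⟩, fun k _ hk hE => ?_⟩
  have hCι : C.encard ≤ Fintype.card ι :=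
    calc C.encard ≤ (range g).encard := encard_mono hCg
      _ ≤ (univ : Set ι).encard := by rw [← image_univ]; exact encard_image_le _ _
      _ = Fintype.card ι := by rw [encard_univ, ENat.card_eq_coe_fintype_card]
  exact_mod_cast (hk.le_encard_of_isCocircuit (hMX.1 ▸ hE) hC).trans hCι

/-- `Γ = range g` contains a cocircuit of the Γ-extension `M^X`; consequently, if `M^X` is
`k`-connected (`k ≥ 2`) and has at least `2(k-1)` elements, then `|X| ≥ k`. -/
theorem stmt_14 {α ρ ι : Type*} [Fintype ι] [Nonempty ι]
    (M MX : Matroid α) (S : Set α) (A : α → ρ → ZMod 2) (x g : ι → α)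
    (hxinj : Function.Injective x) (hginj : Function.Injective g)
    (hxS : Set.range x ⊆ S) (hdisj : Disjoint S (Set.range g))
    (hXindep : M.Indep (Set.range x))
    (hM : IsBinaryRep M S A)
    (hMX : IsBinaryRep MX (S ∪ Set.range g) (gammaCols A x g)) :
    (∃ C : Set α, C ⊆ Set.range g ∧ MatroidCocircuit MX C) ∧
      (∀ k : ℕ, 2 ≤ k → KConnected MX k →
        ((2 * (k - 1) : ℕ) : ℕ∞) ≤ (S ∪ Set.range g).encard → k ≤ Fintype.card ι) :=
  stmt_14_general MX S A x g hMX
end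

section
/- Let k ≥ 5 be an integer, let M be a k-connected binary matroid with at least 2(k−1) elements, and let X be an independent set in M with |X| ≥ 2. Then the Γ-extension matroid M^X is not k-connected. -/
/-!
Over GF(2) the columns of `x_i` and `γ_i` differ exactly by the unit vector of the new row, so
for `i ≠ j` the four columns of `x_i, γ_i, x_j, γ_j` sum to zero and these elements form a
dependent set of size at most `4 ≤ k - 1`. In any matroid with at least `2(k-1)` elements, a
dependent set of size at most `k - 1` can be padded to a set `A` of exactly `k - 1` elements;
then `r(A) ≤ k - 2` and `r(E - A) ≤ r(M)`, so `(A, E - A)` is a `(k-1)`-separation.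
-/

open Set
open scoped Classical

theorem matroidERk_eq_eRk {α : Type*} (M : Matroid α) (X : Set α) :
    matroidERk M X = M.eRk X := by
  refine le_antisymm (iSup_le fun I => I.2.1.encard_le_eRk_of_subset I.2.2) ?_
  obtain ⟨I, hI⟩ := M.exists_isBasis' X
  rw [← hI.encard_eq_eRk]
  exact le_iSup_of_le ⟨I, hI.indep, hI.subset⟩ le_rfl

theorem matroidERank_eq_eRank {α : Type*} (M : Matroid α) : matroidERank M = M.eRank := by
  rw [matroidERank, matroidERk_eq_eRk, Matroid.eRk_ground]

namespace Matroid

variable {α : Type*} {M : Matroid α}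

theorem Dep.exists_kSeparation {D : Set α} {n : ℕ} (hD : M.Dep D) (hDn : D.encard ≤ n)
    (hE : 2 * (n : ℕ∞) ≤ M.E.encard) : ∃ A B, KSeparation M n A B := by
  have hnE : (n : ℕ∞) ≤ M.E.encard := le_trans (by rw [two_mul]; exact le_self_add) hE
  obtain ⟨A, hDA, hAE, hA⟩ := exists_superset_subset_encard_eq hD.subset_ground hDn hnE
  have hrA : M.eRk A < n :=
    hA ▸ M.eRk_lt_encard_of_dep_of_finite (finite_of_encard_eq_coe hA) (hD.superset hDA hAE)
  refine ⟨A, M.E \ A, disjoint_sdiff_right, union_sdiff_cancel hAE, hA.ge, ?_, ?_⟩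
  · rw [← encard_sdiff_add_encard_of_subset hAE, hA, two_mul] at hE
    exact (ENat.add_le_add_iff_right (ENat.natCast_ne_top n)).mp hE
  · rw [matroidERk_eq_eRk, matroidERk_eq_eRk, matroidERank_eq_eRank, add_comm]
    exact add_le_add (M.eRk_le_eRank _) (ENat.le_sub_one_of_lt hrA)

theorem _root_.KConnected.lt_encard_of_dep {k : ℕ} (hM : KConnected M k)
    (hE : 2 * ((k - 1 : ℕ) : ℕ∞) ≤ M.E.encard) {D : Set α} (hD : M.Dep D) :
    ((k - 1 : ℕ) : ℕ∞) < D.encard := by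
  by_contra! hDk
  obtain ⟨A, B, hAB⟩ := hD.exists_kSeparation hDk hE
  exact hM A B hAB

end Matroid

theorem IsBinaryRep.dep_of_sum_eq_zero {α ρ : Type*} {M : Matroid α} {S : Set α}
    {A : α → ρ → ZMod 2} (hM : IsBinaryRep M S A) {D : Finset α} (hne : D.Nonempty)
    (hDS : ↑D ⊆ S) (hsum : ∑ e ∈ D, A e = 0) : M.Dep D := by
  refine ⟨fun hI => ?_, hM.1 ▸ hDS⟩
  obtain ⟨e, he⟩ := hne
  exact not_linearIndepOn_finset_iff.mpr ⟨fun _ => 1, by simpa using hsum, e, he, one_ne_zero⟩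
    ((hM.2 _).1 hI).2

section GammaCols

variable {α ρ ι : Type*} {A : α → ρ → ZMod 2} {x g : ι → α}

theorem gammaCols_of_notMem_range {e : α} (he : e ∉ range g) :
    gammaCols A x g e = fun o => o.elim 0 (A e) := by
  funext o
  rw [gammaCols, dif_neg (by simpa using he)]

theorem gammaCols_apply_of_injective (hg : Function.Injective g) (i : ι) :
    gammaCols A x g (g i) = fun o => o.elim 1 (A (x i)) := by
  have hex : ∃ j, g j = g i := ⟨i, rfl⟩
  funext o
  rw [gammaCols, dif_pos hex, hg hex.choose_spec]

theorem sum_pair_gammaCols (hg : Function.Injective g) {i : ι} (hx : x i ∉ range g) :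
    ∑ e ∈ {x i, g i}, gammaCols A x g e = Pi.single none 1 := by
  rw [Finset.sum_pair fun h => hx ⟨i, h.symm⟩, gammaCols_of_notMem_range hx,
    gammaCols_apply_of_injective hg]
  funext o
  cases o <;> simp [CharTwo.add_self_eq_zero]

end GammaCols

theorem stmt_15_general {α ρ ι : Type*} [Fintype ι]
    (MX : Matroid α) (S : Set α) (A : α → ρ → ZMod 2) (x g : ι → α)
    (hxinj : Function.Injective x) (hginj : Function.Injective g)
    (hxS : Set.range x ⊆ S) (hdisj : Disjoint S (Set.range g))
    (hMX : IsBinaryRep MX (S ∪ Set.range g) (gammaCols A x g))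
    (hX2 : 2 ≤ Fintype.card ι)
    (k : ℕ) (hk : 5 ≤ k)
    (hcard : ((2 * (k - 1) : ℕ) : ℕ∞) ≤ S.encard) :
    ¬ KConnected MX k := by
  intro hcon
  obtain ⟨i, j, hij⟩ := Fintype.exists_pair_of_one_lt_card hX2
  have hx_range : ∀ l, x l ∉ range g := fun l => disjoint_left.mp hdisj (hxS ⟨l, rfl⟩)
  have hxg_ne : ∀ l l', x l ≠ g l' := fun l l' h => hx_range l ⟨l', h.symm⟩
  set D : Finset α := {x i, g i} ∪ {x j, g j}
  have hpairs : Disjoint ({x i, g i} : Finset α) {x j, g j} := by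
    simp only [Finset.disjoint_insert_left, Finset.disjoint_insert_right,
      Finset.disjoint_singleton, Finset.mem_insert, Finset.mem_singleton, hginj.ne_iff]
    exact ⟨not_or.mpr ⟨hxinj.ne hij.symm, hxg_ne j i⟩, hxg_ne i j, hij⟩
  have hDS : ↑D ⊆ S ∪ range g := by
    simp [D, insert_subset_iff, hxS ⟨i, rfl⟩, hxS ⟨j, rfl⟩]
  have hdep : MX.Dep D := hMX.dep_of_sum_eq_zero ⟨x i, by simp [D]⟩ hDS <| by
    rw [Finset.sum_union hpairs, sum_pair_gammaCols hginj (hx_range i),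
      sum_pair_gammaCols hginj (hx_range j), CharTwo.add_self_eq_zero]
  have hE : 2 * ((k - 1 : ℕ) : ℕ∞) ≤ MX.E.encard := by
    rw [hMX.1]
    exact_mod_cast hcard.trans (encard_le_encard subset_union_left)
  have hD4 : D.card ≤ 4 :=
    (Finset.card_union_le _ _).trans (add_le_add Finset.card_le_two Finset.card_le_two)
  have hlt := hcon.lt_encard_of_dep hE hdep
  rw [encard_coe_eq_coe_finsetCard] at hlt
  norm_cast at hlt
  omega

/-- For `k ≥ 5`, a `k`-connected binary matroid `M` with at least `2(k-1)` elements, and an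
independent set `X = range x` with `|X| ≥ 2`, the Γ-extension `M^X` is not `k`-connected. -/
theorem stmt_15 {α ρ ι : Type*} [Fintype ι] [Nonempty ι]
    (M MX : Matroid α) (S : Set α) (A : α → ρ → ZMod 2) (x g : ι → α)
    (hxinj : Function.Injective x) (hginj : Function.Injective g)
    (hxS : Set.range x ⊆ S) (hdisj : Disjoint S (Set.range g))
    (hXindep : M.Indep (Set.range x))
    (hM : IsBinaryRep M S A)
    (hMX : IsBinaryRep MX (S ∪ Set.range g) (gammaCols A x g))
    (hX2 : 2 ≤ Fintype.card ι)
    (k : ℕ) (hk : 5 ≤ k) (hMconn : KConnected M k)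
    (hcard : ((2 * (k - 1) : ℕ) : ℕ∞) ≤ S.encard) :
    ¬ KConnected MX k :=
  stmt_15_general MX S A x g hxinj hginj hxS hdisj hMX hX2 k hk hcard
end
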